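/- Tree iteration step decreases the measure: In the extension of the system with labeled binary trees, assume t₁, t₂ are trees with n₁ and n₂ nodes respectively, and N ≥ n₁ + n₂ + 1. Then P(consTree d a t₁ t₂ {s | r})(N) + |consTree d a t₁ t₂ {s | r}| > P(s d a (t₁{s | r}) (t₂{s | r}))(N) + |s d a (t₁{s | r}) (t₂{s | r})|. -/
import Mathlib


namespace AS

inductive Ty : Type
  | dia | bool
  | arrow (τ ρ : Ty)
  | tensor (τ ρ : Ty)
  | prod (τ ρ : Ty)
  | list (τ : Ty)
  | tree (τ ρ : Ty)
  deriving DecidableEq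

structure Var : Type where
  name : ℕ
  ty : Ty
  deriving DecidableEq

inductive Const : Type
  | tt | ff
  | nil (τ : Ty)
  | cons (τ : Ty)
  | tens (τ ρ : Ty)
  | leaf (τ ρ : Ty)
  | consTree (τ ρ : Ty)
  deriving DecidableEq

def Const.type : Const → Ty
  | .tt => .bool
  | .ff => .bool
  | .nil τ => .list τ
  | .cons τ => .arrow .dia (.arrow τ (.arrow (.list τ) (.list τ)))
  | .tens τ ρ => .arrow τ (.arrow ρ (.tensor τ ρ))
  | .leaf τ ρ => .arrow ρ (.tree τ ρ)
  | .consTree τ ρ =>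
      .arrow .dia (.arrow τ (.arrow (.tree τ ρ) (.arrow (.tree τ ρ) (.tree τ ρ))))

inductive Tm : Type
  | var (x : Var)
  | const (c : Const)
  | lam (x : Var) (t : Tm)
  | pair (t s : Tm)
  | app (t s : Tm)
  | brace (t : Tm)
  | brace2 (s r : Tm)
  deriving DecidableEq

/-- The typing relation `Γ ⊢ t : τ` of the affine linear system extended with
    labeled binary trees. -/
inductive Typed : Finset Var → Tm → Ty → Prop
  | var {Γ : Finset Var} {x : Var} (h : x ∈ Γ) : Typed Γ (.var x) x.ty
  | const {Γ : Finset Var} (c : Const) : Typed Γ (.const c) c.type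
  | lamI {Γ : Finset Var} {x : Var} {t : Tm} {ρ : Ty}
      (h : Typed (insert x Γ) t ρ) : Typed Γ (.lam x t) (.arrow x.ty ρ)
  | arrE {Γ₁ Γ₂ : Finset Var} {t s : Tm} {τ ρ : Ty}
      (hd : Disjoint Γ₁ Γ₂) (ht : Typed Γ₁ t (.arrow τ ρ)) (hs : Typed Γ₂ s τ) :
      Typed (Γ₁ ∪ Γ₂) (.app t s) ρ
  | pairI {Γ : Finset Var} {t s : Tm} {τ ρ : Ty}
      (ht : Typed Γ t τ) (hs : Typed Γ s ρ) : Typed Γ (.pair t s) (.prod τ ρ)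
  | prodE1 {Γ : Finset Var} {t : Tm} {τ ρ : Ty} (h : Typed Γ t (.prod τ ρ)) :
      Typed Γ (.app t (.const .tt)) τ
  | prodE0 {Γ : Finset Var} {t : Tm} {τ ρ : Ty} (h : Typed Γ t (.prod τ ρ)) :
      Typed Γ (.app t (.const .ff)) ρ
  | boolE {Γ₁ Γ₂ : Finset Var} {t s r : Tm} {τ : Ty}
      (hd : Disjoint Γ₁ Γ₂) (ht : Typed Γ₁ t .bool)
      (hs : Typed Γ₂ s τ) (hr : Typed Γ₂ r τ) :
      Typed (Γ₁ ∪ Γ₂) (.app t (.pair s r)) τ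
  | tensE {Γ₁ Γ₂ : Finset Var} {t s : Tm} {x y : Var} {σ : Ty}
      (hd : Disjoint Γ₁ Γ₂)
      (ht : Typed Γ₁ t (.tensor x.ty y.ty))
      (hs : Typed (insert x (insert y Γ₂)) s σ) :
      Typed (Γ₁ ∪ Γ₂) (.app t (.lam x (.lam y s))) σ
  | listE {Γ : Finset Var} {t s : Tm} {τ ρ : Ty}
      (ht : Typed Γ t (.list τ))
      (hs : Typed ∅ s (.arrow .dia (.arrow τ (.arrow ρ ρ)))) :
      Typed Γ (.app t (.brace s)) (.arrow ρ ρ)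
  | treeE {Γ : Finset Var} {t s r : Tm} {τ ρ σ : Ty}
      (ht : Typed Γ t (.tree τ ρ))
      (hs : Typed ∅ s (.arrow .dia (.arrow τ (.arrow σ (.arrow σ σ)))))
      (hr : Typed ∅ r (.arrow ρ σ)) :
      Typed Γ (.app t (.brace2 s r)) σ

/-- `IsList t n`: `t` is a list with `n` entries. -/
inductive IsList : Tm → ℕ → Prop
  | nil {τ : Ty} : IsList (.const (.nil τ)) 0
  | cons {τ : Ty} {d a ℓ : Tm} {n : ℕ}
      (hd : ∃ Γ, Typed Γ d .dia) (hℓ : IsList ℓ n) :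
      IsList (.app (.app (.app (.const (.cons τ)) d) a) ℓ) (n + 1)

/-- `IsTree t n`: `t` is a tree with `n` nodes. -/
inductive IsTree : Tm → ℕ → Prop
  | leaf {τ ρ : Ty} {t : Tm} : IsTree (.app (.const (.leaf τ ρ)) t) 0
  | node {τ ρ : Ty} {d a t₁ t₂ : Tm} {n₁ n₂ : ℕ}
      (hd : ∃ Γ, Typed Γ d .dia) (h₁ : IsTree t₁ n₁) (h₂ : IsTree t₂ n₂) :
      IsTree (.app (.app (.app (.app (.const (.consTree τ ρ)) d) a) t₁) t₂)
        (n₁ + n₂ + 1)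

/-- The length of a term, with `|{s|r}| = |r|`. -/
def len : Tm → ℕ
  | .var _ => 1
  | .const _ => 1
  | .lam _ t => len t + 1
  | .pair t s => max (len t) (len s) + 1
  | .app t s => len t + len s
  | .brace _ => 0
  | .brace2 _ r => len r

open Classical in
/-- The polynomial bound `P(t) : ℕ → ℕ`, extended to tree iteration. -/
noncomputable def P : Tm → ℕ → ℕ
  | .var _, _ => 0
  | .const _, _ => 0
  | .lam _ t, m => P t m
  | .pair t s, m => max (P t m) (P s m)
  | .brace h, m => m * P h m + m * len h
  | .brace2 s r, m => m * P s m + (m + 1) * P r m + m * len s + m * len r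
  | .app t (.brace h), m =>
      if hl : ∃ n, IsList t n then
        P t m + min hl.choose m * P h m + min hl.choose m * len h
      else P t m + (m * P h m + m * len h)
  | .app t (.brace2 s r), m =>
      if ht : ∃ n, IsTree t n then
        P t m + min ht.choose m * P s m + (min ht.choose m + 1) * P r m +
          min ht.choose m * len s + min ht.choose m * len r
      else P t m + (m * P s m + (m + 1) * P r m + m * len s + m * len r)
  | .app t s, m => P t m + P s m

end AS

namespace AS

lemma tree_count_unique : ∀ {t : Tm} {n m : ℕ}, IsTree t n → IsTree t m → n = m := by
  intro t n m h
  induction h generalizing m with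
  | leaf => intro h'; cases h'; rfl
  | node hd h₁ h₂ ih₁ ih₂ =>
      intro h'
      cases h' with
      | node hd' h₁' h₂' => rw [ih₁ h₁', ih₂ h₂']

/-- Worst-case contribution of the argument in an application. -/
noncomputable def W : Tm → ℕ → ℕ
  | .brace h, m => m * P h m + m * len h
  | .brace2 s r, m => m * P s m + (m + 1) * P r m + m * len s + m * len r
  | t, m => P t m

lemma P_app_le (X a : Tm) (N : ℕ) : P (.app X a) N ≤ P X N + W a N := by
  cases a with
  | brace h =>
      simp only [P, W]
      split
      · next hl =>
          have : min hl.choose N ≤ N := min_le_right _ _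
          nlinarith [Nat.mul_le_mul_right (P h N) this, Nat.mul_le_mul_right (len h) this]
      · omega
  | brace2 s r =>
      simp only [P, W]
      split
      · next ht =>
          have : min ht.choose N ≤ N := min_le_right _ _
          nlinarith [Nat.mul_le_mul_right (P s N) this, Nat.mul_le_mul_right (P r N) this,
            Nat.mul_le_mul_right (len s) this, Nat.mul_le_mul_right (len r) this]
      · omega
  | var x => simp [P, W]
  | const c => simp [P, W]
  | lam x t => simp [P, W]
  | pair t u => simp [P, W]
  | app t u => simp [P, W]

lemma P_app_eq (X a : Tm) (N : ℕ) (hl : ¬ ∃ n, IsList X n) (ht : ¬ ∃ n, IsTree X n) :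
    P (.app X a) N = P X N + W a N := by
  cases a with
  | brace h => simp only [P, W]; rw [dif_neg hl]
  | brace2 s r => simp only [P, W]; rw [dif_neg ht]
  | var x => simp [P, W]
  | const c => simp [P, W]
  | lam x t => simp [P, W]
  | pair t u => simp [P, W]
  | app t u => simp [P, W]

lemma P_app_tree {t : Tm} (s r : Tm) {N n : ℕ} (h : IsTree t n) (hn : n ≤ N) :
    P (.app t (.brace2 s r)) N =
      P t N + n * P s N + (n + 1) * P r N + n * len s + n * len r := by
  simp only [P]
  rw [dif_pos ⟨n, h⟩]
  have hc := (Exists.choose_spec (⟨n, h⟩ : ∃ n, IsTree t n))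
  have : (⟨n, h⟩ : ∃ n, IsTree t n).choose = n := tree_count_unique hc h
  rw [this, min_eq_left hn]

lemma not_isList_const {c : Const} (h : ∀ τ, c ≠ .nil τ) : ¬ ∃ n, IsList (.const c) n := by
  rintro ⟨n, hn⟩; cases hn with | nil => exact h _ rfl

lemma not_isTree_const {c : Const} : ¬ ∃ n, IsTree (.const c) n := by
  rintro ⟨n, hn⟩; cases hn

lemma not_isList_app1 {τ ρ : Ty} {d : Tm} :
    ¬ ∃ n, IsList (.app (.const (.consTree τ ρ)) d) n := by
  rintro ⟨n, hn⟩; cases hn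

lemma not_isTree_app1 {τ ρ : Ty} {d : Tm} :
    ¬ ∃ n, IsTree (.app (.const (.consTree τ ρ)) d) n := by
  rintro ⟨n, hn⟩; cases hn

lemma not_isList_app2 {τ ρ : Ty} {d a : Tm} :
    ¬ ∃ n, IsList (.app (.app (.const (.consTree τ ρ)) d) a) n := by
  rintro ⟨n, hn⟩; cases hn

lemma not_isTree_app2 {τ ρ : Ty} {d a : Tm} :
    ¬ ∃ n, IsTree (.app (.app (.const (.consTree τ ρ)) d) a) n := by
  rintro ⟨n, hn⟩; cases hn

lemma P_app_app (X u v : Tm) (N : ℕ) :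
    P (.app X (.app u v)) N = P X N + P (.app u v) N := by
  simp [P]

lemma isTree_big_inv {τ ρ : Ty} {d a t₁ t₂ : Tm} {n₁ n₂ m : ℕ}
    (h₁ : IsTree t₁ n₁) (h₂ : IsTree t₂ n₂)
    (h : IsTree (.app (.app (.app (.app (.const (.consTree τ ρ)) d) a) t₁) t₂) m) :
    m = n₁ + n₂ + 1 := by
  cases h with
  | node hd h₁' h₂' => rw [tree_count_unique h₁' h₁, tree_count_unique h₂' h₂]

lemma not_isList_big {τ ρ : Ty} {d a t₁ t₂ : Tm} :
    ¬ ∃ n, IsList (.app (.app (.app (.app (.const (.consTree τ ρ)) d) a) t₁) t₂) n := by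
  rintro ⟨n, hn⟩; cases hn

/-- Tree iteration step decreases the measure: unfolding the tree iteration at
    a node `consTree d a t₁ t₂` strictly decreases `P(·)(N) + |·|` whenever
    `N ≥ n₁ + n₂ + 1`. -/
theorem tree_iteration_step {τ ρ : Ty} {d a t₁ t₂ s r : Tm} {n₁ n₂ N : ℕ}
    (h₁ : IsTree t₁ n₁) (h₂ : IsTree t₂ n₂) (hN : n₁ + n₂ + 1 ≤ N) :
    P (.app (.app (.app (.app s d) a) (.app t₁ (.brace2 s r)))
        (.app t₂ (.brace2 s r))) N +
      len (.app (.app (.app (.app s d) a) (.app t₁ (.brace2 s r)))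
        (.app t₂ (.brace2 s r))) <
    P (.app (.app (.app (.app (.app (.const (.consTree τ ρ)) d) a) t₁) t₂)
        (.brace2 s r)) N +
      len (.app (.app (.app (.app (.app (.const (.consTree τ ρ)) d) a) t₁) t₂)
        (.brace2 s r)) := by
  have hn₁ : n₁ ≤ N := by omega
  have hn₂ : n₂ ≤ N := by omega
  have hT₁ := P_app_tree s r h₁ hn₁
  have hT₂ := P_app_tree s r h₂ hn₂
  obtain ⟨u₁, v₁, e₁⟩ : ∃ u v, t₁ = .app u v := by cases h₁ <;> exact ⟨_, _, rfl⟩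
  obtain ⟨u₂, v₂, e₂⟩ : ∃ u v, t₂ = .app u v := by cases h₂ <;> exact ⟨_, _, rfl⟩
  -- LHS polynomial
  have hL : P (.app (.app (.app (.app s d) a) (.app t₁ (.brace2 s r)))
        (.app t₂ (.brace2 s r))) N ≤
      P s N + W d N + W a N + P t₁ N + P t₂ N +
        (n₁ + n₂) * P s N + (n₁ + n₂ + 2) * P r N +
        (n₁ + n₂) * len s + (n₁ + n₂) * len r := by
    rw [P_app_app, P_app_app, hT₁, hT₂]
    have h3 := P_app_le (.app s d) a N
    have h4 := P_app_le s d N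
    nlinarith [h3, h4]
  -- RHS polynomial
  have hBig : P (.app (.app (.app (.app (.const (.consTree τ ρ)) d) a) t₁) t₂) N =
      W d N + W a N + P t₁ N + P t₂ N := by
    rw [e₁, e₂, P_app_app, P_app_app,
      P_app_eq _ a N not_isList_app1 not_isTree_app1,
      P_app_eq _ d N (not_isList_const (by intro τ h; cases h)) not_isTree_const]
    simp only [P]
    omega
  have hR : W d N + W a N + P t₁ N + P t₂ N +
      (n₁ + n₂ + 1) * P s N + (n₁ + n₂ + 2) * P r N +
      (n₁ + n₂ + 1) * len s + (n₁ + n₂ + 1) * len r ≤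
      P (.app (.app (.app (.app (.app (.const (.consTree τ ρ)) d) a) t₁) t₂)
        (.brace2 s r)) N := by
    by_cases hB : ∃ n, IsTree (.app (.app (.app (.app (.const (.consTree τ ρ)) d) a) t₁) t₂) n
    · obtain ⟨m, hm⟩ := hB
      have hm' := isTree_big_inv h₁ h₂ hm
      subst hm'
      rw [P_app_tree s r hm hN, hBig]
    · rw [P_app_eq _ _ N not_isList_big hB, hBig]
      simp only [W]
      have c1 : (n₁ + n₂ + 1) * P s N ≤ N * P s N := Nat.mul_le_mul_right _ hN
      have c2 : (n₁ + n₂ + 2) * P r N ≤ (N + 1) * P r N :=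
        Nat.mul_le_mul_right _ (by omega)
      have c3 : (n₁ + n₂ + 1) * len s ≤ N * len s := Nat.mul_le_mul_right _ hN
      have c4 : (n₁ + n₂ + 1) * len r ≤ N * len r := Nat.mul_le_mul_right _ hN
      omega
  have hlen : len (.app (.app (.app (.app s d) a) (.app t₁ (.brace2 s r)))
        (.app t₂ (.brace2 s r))) + 1 =
      len (.app (.app (.app (.app (.app (.const (.consTree τ ρ)) d) a) t₁) t₂)
        (.brace2 s r)) + len s + len r := by
    simp [len]; ring
  have key : (n₁ + n₂ + 1) * len s = (n₁ + n₂) * len s + len s := by ring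
  have key2 : (n₁ + n₂ + 1) * len r = (n₁ + n₂) * len r + len r := by ring
  have key3 : (n₁ + n₂ + 1) * P s N = (n₁ + n₂) * P s N + P s N := by ring
  omega

end AS
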